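/- Fix μ ∈ [0,1] and define D_z := A⁽¹⁾⊗A⁽¹⁾ − A⁽⁻¹⁾⊗A⁽⁻¹⁾ (the transfer-matrix insertion corresponding to the spin-1 operator Ŝᶻ = diag(1,0,−1)). Then for every integer r ≥ 1, lim_{L→∞} Tr[D_z · T(μ)^{r−1} · D_z · T(μ)^{L−r−1}] / Tr[T(μ)^L] = (4/3)·(λ₋(μ)/λ₊(μ))^r. (This is the longitudinal spin-spin correlation function ⟨Ŝᶻ_j Ŝᶻ_{j+r}⟩ in the infinite-volume S=1 asymmetric VBS state.) -/

import Mathlib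

/-!
In the basis `|00⟩, |11⟩, |01⟩, |10⟩` both `T(μ)` and `D_z` are block diagonal:
`T = M ⊕ (-μ/2)·1` and `D_z = J ⊕ 0` with `M = [[1/2, μ], [μ, μ²/2]]` and `J = [[0, -μ], [μ, 0]]`.
The eigenvalues of `M` are `λ₊` and `λ₋`, so `Tr T^L = λ₊^L + λ₋^L + 2(-μ/2)^L`. Writing
`(λ₊ - λ₋) M^k = λ₊^k (M - λ₋) - λ₋^k (M - λ₊)` and using that conjugation by `J` exchanges
`M - λ₋` and `M - λ₊` up to the factor `μ²`, one gets
`Tr[J M^j J M^n] = -μ² (λ₊^j λ₋^n + λ₋^j λ₊^n)`. Since `λ₊` strictly dominates `|λ₋|` and `μ/2`,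
the ratio tends to `-μ² λ₋^(r-1) / λ₊^(r+1)`, which is `(4/3)(λ₋/λ₊)^r` because `λ₊λ₋ = -3μ²/4`.
-/

open Matrix Kronecker Filter

/-- The matrix `A⁽¹⁾` of the S=1 asymmetric VBS state. -/
noncomputable def A1 (μ : ℝ) : Matrix (Fin 2) (Fin 2) ℝ := !![0, 0; -Real.sqrt μ, 0]

/-- The matrix `A⁽⁰⁾` of the S=1 asymmetric VBS state. -/
noncomputable def A0 (μ : ℝ) : Matrix (Fin 2) (Fin 2) ℝ :=
  (1 / Real.sqrt 2) • !![1, 0; 0, -μ]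

/-- The matrix `A⁽⁻¹⁾` of the S=1 asymmetric VBS state. -/
noncomputable def Am1 (μ : ℝ) : Matrix (Fin 2) (Fin 2) ℝ := !![0, Real.sqrt μ; 0, 0]

/-- The transfer matrix `T(μ)` of the S=1 asymmetric VBS state. -/
noncomputable def T (μ : ℝ) : Matrix (Fin 2 × Fin 2) (Fin 2 × Fin 2) ℝ :=
  A1 μ ⊗ₖ A1 μ + A0 μ ⊗ₖ A0 μ + Am1 μ ⊗ₖ Am1 μ

/-- The transfer-matrix insertion `D_z` corresponding to the spin-1 operator `Ŝᶻ`. -/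
noncomputable def Dz (μ : ℝ) : Matrix (Fin 2 × Fin 2) (Fin 2 × Fin 2) ℝ :=
  A1 μ ⊗ₖ A1 μ - Am1 μ ⊗ₖ Am1 μ

/-- The eigenvalue `λ₊(μ)`. -/
noncomputable def lamP (μ : ℝ) : ℝ := (μ ^ 2 + 1 + Real.sqrt (μ ^ 4 + 14 * μ ^ 2 + 1)) / 4

/-- The eigenvalue `λ₋(μ)`. -/
noncomputable def lamM (μ : ℝ) : ℝ := (μ ^ 2 + 1 - Real.sqrt (μ ^ 4 + 14 * μ ^ 2 + 1)) / 4

section Lagrange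

variable {R A : Type*} [CommRing R] [Ring A] [Algebra R A]

theorem sub_smul_pow_eq_of_sub_mul_sub_eq_zero {a : A} {p q : R}
    (h : (a - p • 1) * (a - q • 1) = 0) (k : ℕ) :
    (p - q) • a ^ k = p ^ k • (a - q • 1) - q ^ k • (a - p • 1) := by
  have hcomm : (a - q • 1) * (a - p • 1) = (a - p • 1) * (a - q • 1) := by
    simp only [sub_mul, mul_sub, smul_mul_assoc, mul_smul_comm, one_mul, mul_one, smul_sub,
      smul_smul, mul_comm p q]
    abel
  have hp : (a - p • 1) * a = q • (a - p • 1) := by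
    rw [← sub_eq_zero, ← h]; simp only [mul_sub, mul_smul_comm, mul_one, smul_sub]
  have hq : (a - q • 1) * a = p • (a - q • 1) := by
    rw [← sub_eq_zero, ← h, ← hcomm]; simp only [mul_sub, mul_smul_comm, mul_one, smul_sub]
  induction k with
  | zero => simp only [pow_zero, one_smul, sub_smul]; abel
  | succ k ih =>
    rw [pow_succ, ← smul_mul_assoc, ih, sub_mul, smul_mul_assoc, smul_mul_assoc, hp, hq,
      smul_smul, smul_smul, pow_succ, pow_succ]

theorem sub_mul_self_of_sub_mul_sub_eq_zero {a : A} {p q : R}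
    (h : (a - p • 1) * (a - q • 1) = 0) :
    (a - p • 1) * (a - p • 1) = (q - p) • (a - p • 1) := by
  rw [← sub_eq_zero, ← h]; simp only [mul_sub, mul_smul_comm, mul_one, sub_smul, smul_sub]; abel

end Lagrange

namespace Matrix

variable {α m n : Type*} [Fintype m] [Fintype n] [AddCommMonoid α]

theorem trace_fromBlocks (A : Matrix m m α) (B : Matrix m n α) (C : Matrix n m α)
    (D : Matrix n n α) : (fromBlocks A B C D).trace = A.trace + D.trace := by
  simp [trace, Fintype.sum_sum_type]

theorem trace_reindex (e : m ≃ n) (A : Matrix m m α) : (reindex e e A).trace = A.trace :=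
  e.symm.sum_comp fun i => A i i

theorem trace_pow_fin_two_of_sub_mul_sub_eq_zero {K : Type*} [Field K]
    {M : Matrix (Fin 2) (Fin 2) K} {p q : K} (hpq : p ≠ q)
    (h : (M - p • 1) * (M - q • 1) = 0) (htr : M.trace = p + q) (k : ℕ) :
    (M ^ k).trace = p ^ k + q ^ k := by
  apply mul_left_cancel₀ (sub_ne_zero.2 hpq)
  rw [← smul_eq_mul, ← trace_smul, sub_smul_pow_eq_of_sub_mul_sub_eq_zero h]
  simp only [trace_sub, trace_smul, trace_one, htr, Fintype.card_fin, smul_eq_mul]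
  push_cast
  ring

end Matrix

theorem tendsto_pow_div_pow_of_abs_lt {x p : ℝ} (h : |x| < p) :
    Tendsto (fun m : ℕ => (x / p) ^ m) atTop (nhds 0) := by
  have hp : 0 < p := (abs_nonneg x).trans_lt h
  exact tendsto_pow_atTop_nhds_zero_of_abs_lt_one (by rwa [abs_div, abs_of_pos hp, div_lt_one hp])

theorem tendsto_pow_ratio_of_dominant {p q c : ℝ} (hq : |q| < p) (hc : |c| < p) (a b : ℝ) (j s : ℕ) :
    Tendsto (fun m : ℕ => a * (p ^ j * q ^ m + q ^ j * p ^ m) /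
        (p ^ (m + s) + q ^ (m + s) + b * c ^ (m + s))) atTop (nhds (a * q ^ j / p ^ s)) := by
  have hp : 0 < p := (abs_nonneg q).trans_lt hq
  have hu := tendsto_pow_div_pow_of_abs_lt hq
  have hv := tendsto_pow_div_pow_of_abs_lt hc
  have hlim := (((hu.const_mul (p ^ j)).add_const (q ^ j)).const_mul a).div
    (((hu.const_mul (q ^ s)).const_add (p ^ s)).add (hv.const_mul (b * c ^ s)))
    (by simpa using (pow_pos hp s).ne')
  simp only [mul_zero, zero_add, add_zero] at hlim
  refine hlim.congr fun m => ?_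
  rw [Pi.div_apply, div_pow, div_pow, eq_comm,
    ← mul_div_mul_right _ _ (inv_ne_zero (pow_ne_zero m hp.ne'))]
  congr 1
  · field_simp
  · field_simp; ring

section Eigenvalues

variable (μ : ℝ)

theorem lamP_add_lamM : lamP μ + lamM μ = (μ ^ 2 + 1) / 2 := by
  unfold lamP lamM; ring

theorem lamP_mul_lamM : lamP μ * lamM μ = -3 * μ ^ 2 / 4 := by
  have hs := Real.sq_sqrt (show 0 ≤ μ ^ 4 + 14 * μ ^ 2 + 1 by positivity)
  unfold lamP lamM
  linear_combination (-1 / 16) * hs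

theorem half_sq_add_one_le_lamP : (μ ^ 2 + 1) / 2 ≤ lamP μ := by
  have hs : μ ^ 2 + 1 ≤ Real.sqrt (μ ^ 4 + 14 * μ ^ 2 + 1) :=
    Real.le_sqrt_of_sq_le (by nlinarith [sq_nonneg μ])
  unfold lamP; linarith

theorem lamM_le_zero : lamM μ ≤ 0 := by
  have := lamP_add_lamM μ
  linarith [half_sq_add_one_le_lamP μ]

theorem abs_lamM_lt_lamP : |lamM μ| < lamP μ := by
  rw [abs_of_nonpos (lamM_le_zero μ)]
  linarith [lamP_add_lamM μ, sq_nonneg μ]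

theorem lamM_lt_lamP : lamM μ < lamP μ :=
  (le_abs_self _).trans_lt (abs_lamM_lt_lamP μ)

theorem abs_neg_half_lt_lamP : |-μ / 2| < lamP μ := by
  refine lt_of_lt_of_le ?_ (half_sq_add_one_le_lamP μ)
  rw [abs_div, abs_neg, abs_two]
  nlinarith [abs_nonneg μ, sq_abs μ, sq_nonneg (|μ| - 1)]

end Eigenvalues

def diagOffDiagEquiv : Fin 2 × Fin 2 ≃ Fin 2 ⊕ Fin 2 where
  toFun x := if x.1 = x.2 then .inl x.1 else .inr x.1
  invFun := Sum.elim (fun i => (i, i)) (fun i => (i, i.rev))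
  left_inv := by decide
  right_inv := by decide

noncomputable def transferBlock (μ : ℝ) : Matrix (Fin 2) (Fin 2) ℝ := !![1 / 2, μ; μ, μ ^ 2 / 2]

def szBlock (μ : ℝ) : Matrix (Fin 2) (Fin 2) ℝ := !![0, -μ; μ, 0]

section BlockForm

variable {μ : ℝ}

theorem reindex_T (hμ : 0 ≤ μ) :
    reindex diagOffDiagEquiv diagOffDiagEquiv (T μ) =
      fromBlocks (transferBlock μ) 0 0 ((-μ / 2) • 1) := by
  have hμ' : Real.sqrt μ * Real.sqrt μ = μ := Real.mul_self_sqrt hμ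
  ext (i | i) (j | j) <;> fin_cases i <;> fin_cases j <;>
    simp [T, A1, A0, Am1, transferBlock, diagOffDiagEquiv, kroneckerMap_apply, hμ'] <;>
    ring_nf <;> norm_num <;> ring

theorem reindex_Dz (hμ : 0 ≤ μ) :
    reindex diagOffDiagEquiv diagOffDiagEquiv (Dz μ) = fromBlocks (szBlock μ) 0 0 0 := by
  have hμ' : Real.sqrt μ * Real.sqrt μ = μ := Real.mul_self_sqrt hμ
  ext (i | i) (j | j) <;> fin_cases i <;> fin_cases j <;>
    simp [Dz, A1, Am1, szBlock, diagOffDiagEquiv, kroneckerMap_apply, hμ']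

theorem trace_T_pow (hμ : 0 ≤ μ) (L : ℕ) :
    (T μ ^ L).trace = (transferBlock μ ^ L).trace + 2 * (-μ / 2) ^ L := by
  rw [← trace_reindex diagOffDiagEquiv, ← coe_reindexAlgEquiv ℝ ℝ, map_pow,
    coe_reindexAlgEquiv, reindex_T hμ, fromBlocks_diagonal_pow, trace_fromBlocks, smul_pow,
    one_pow, trace_smul, trace_one]
  simp [mul_comm]

theorem trace_Dz_mul_T_pow_mul_Dz_mul_T_pow (hμ : 0 ≤ μ) (j n : ℕ) :
    (Dz μ * T μ ^ j * Dz μ * T μ ^ n).trace =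
      (szBlock μ * transferBlock μ ^ j * szBlock μ * transferBlock μ ^ n).trace := by
  rw [← trace_reindex diagOffDiagEquiv, ← coe_reindexAlgEquiv ℝ ℝ]
  simp only [map_mul, map_pow, coe_reindexAlgEquiv, reindex_T hμ, reindex_Dz hμ,
    fromBlocks_diagonal_pow, fromBlocks_multiply, trace_fromBlocks]
  simp

end BlockForm

section TransferBlock

variable (μ : ℝ)

theorem transferBlock_sub_mul_sub {p q : ℝ} (hsum : p + q = (μ ^ 2 + 1) / 2)
    (hprod : p * q = -3 * μ ^ 2 / 4) :
    (transferBlock μ - p • 1) * (transferBlock μ - q • 1) = 0 := by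
  ext i j; fin_cases i <;> fin_cases j <;>
    simp [transferBlock, Matrix.mul_apply, Fin.sum_univ_two] <;> grind

theorem szBlock_mul_sub_mul_szBlock {p q : ℝ} (hsum : p + q = (μ ^ 2 + 1) / 2) :
    szBlock μ * (transferBlock μ - q • 1) * szBlock μ = μ ^ 2 • (transferBlock μ - p • 1) := by
  ext i j; fin_cases i <;> fin_cases j <;>
    simp [transferBlock, szBlock, Matrix.mul_apply, Fin.sum_univ_two, vecMul, dotProduct] <;> grind

theorem trace_transferBlock : (transferBlock μ).trace = lamP μ + lamM μ := by
  rw [transferBlock, trace_fin_two_of, lamP_add_lamM]; ring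

theorem trace_transferBlock_pow (k : ℕ) :
    (transferBlock μ ^ k).trace = lamP μ ^ k + lamM μ ^ k :=
  trace_pow_fin_two_of_sub_mul_sub_eq_zero (lamM_lt_lamP μ).ne'
    (transferBlock_sub_mul_sub μ (lamP_add_lamM μ) (lamP_mul_lamM μ))
    (trace_transferBlock μ) k

theorem trace_szBlock_mul_pow_mul_szBlock_mul_pow (j n : ℕ) :
    (szBlock μ * transferBlock μ ^ j * szBlock μ * transferBlock μ ^ n).trace =
      -μ ^ 2 * (lamP μ ^ j * lamM μ ^ n + lamM μ ^ j * lamP μ ^ n) := by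
  set p := lamP μ
  set q := lamM μ
  set J := szBlock μ
  set P := transferBlock μ - q • 1
  set Q := transferBlock μ - p • 1
  have hsum : p + q = (μ ^ 2 + 1) / 2 := lamP_add_lamM μ
  have hprod : p * q = -3 * μ ^ 2 / 4 := lamP_mul_lamM μ
  have hQP : Q * P = 0 := transferBlock_sub_mul_sub μ hsum hprod
  have hPQ : P * Q = 0 := transferBlock_sub_mul_sub μ (by linarith) (by linarith)
  have hJPJ : J * P * J = μ ^ 2 • Q := szBlock_mul_sub_mul_szBlock μ hsum
  have hJQJ : J * Q * J = μ ^ 2 • P := szBlock_mul_sub_mul_szBlock μ (by linarith)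
  have htrP : P.trace = p - q := by simp [P, trace_transferBlock]; ring
  have htrQ : Q.trace = q - p := by simp [Q, trace_transferBlock]; ring
  have hPP : P * P = (p - q) • P := sub_mul_self_of_sub_mul_sub_eq_zero hPQ
  have hQQ : Q * Q = (q - p) • Q := sub_mul_self_of_sub_mul_sub_eq_zero hQP
  have hpq : (p - q) ^ 2 ≠ 0 := pow_ne_zero 2 (sub_ne_zero.2 (lamM_lt_lamP μ).ne')
  apply mul_left_cancel₀ hpq
  calc (p - q) ^ 2 * (J * transferBlock μ ^ j * J * transferBlock μ ^ n).trace
      = (J * ((p - q) • transferBlock μ ^ j) * J * ((p - q) • transferBlock μ ^ n)).trace := by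
        simp only [mul_smul_comm, smul_mul_assoc, smul_smul, trace_smul, smul_eq_mul]; ring
    _ = (J * (p ^ j • P - q ^ j • Q) * J * (p ^ n • P - q ^ n • Q)).trace := by
        rw [sub_smul_pow_eq_of_sub_mul_sub_eq_zero hQP, sub_smul_pow_eq_of_sub_mul_sub_eq_zero hQP]
    _ = (p - q) ^ 2 * (-μ ^ 2 * (p ^ j * q ^ n + q ^ j * p ^ n)) := by
        simp only [mul_sub, sub_mul, mul_smul_comm, smul_mul_assoc, hJPJ, hJQJ, hPQ, hQP, hPP, hQQ,
          smul_zero, trace_zero, trace_sub, trace_smul, htrP, htrQ, smul_eq_mul]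
        ring

end TransferBlock

/-- The longitudinal spin-spin correlation function of the infinite-volume S=1
asymmetric VBS state: `⟨Ŝᶻ_j Ŝᶻ_{j+r}⟩ = (4/3)·(λ₋/λ₊)^r` for every `r ≥ 1`. -/
theorem zz_correlation_S1 (μ : ℝ) (hμ : μ ∈ Set.Icc (0 : ℝ) 1) (r : ℕ) (hr : 1 ≤ r) :
    Tendsto (fun L : ℕ =>
        (Dz μ * T μ ^ (r - 1) * Dz μ * T μ ^ (L - r - 1)).trace / (T μ ^ L).trace)
      atTop (nhds ((4 / 3) * (lamM μ / lamP μ) ^ r)) := by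
  obtain ⟨s, rfl⟩ : ∃ s, r = s + 1 := ⟨r - 1, by omega⟩
  have hlim := tendsto_pow_ratio_of_dominant (abs_lamM_lt_lamP μ) (abs_neg_half_lt_lamP μ)
    (-μ ^ 2) 2 s (s + 2)
  -- with `L = m + (s + 2)` the truncated subtraction `L - r - 1` is exact
  rw [← tendsto_add_atTop_iff_nat (s + 2)]
  convert hlim using 2 with m
  · rw [show s + 1 - 1 = s by omega, show m + (s + 2) - (s + 1) - 1 = m by omega,
      trace_Dz_mul_T_pow_mul_Dz_mul_T_pow hμ.1, trace_szBlock_mul_pow_mul_szBlock_mul_pow,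
      trace_T_pow hμ.1, trace_transferBlock_pow]
  · have hp : lamP μ ≠ 0 := ((abs_nonneg _).trans_lt (abs_lamM_lt_lamP μ)).ne'
    rw [show -μ ^ 2 = 4 / 3 * (lamP μ * lamM μ) by rw [lamP_mul_lamM]; ring, div_pow, pow_add, pow_succ]
    field_simp
    ring
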